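/- Let G be the group ⟨a, b | a b a b^{-1} a^{-1} b a b = b a b a^{-1} b^{-1} a b a, (b a b^{-1} a^{-1} b^{-1} a b a^{-1})^n a^m = 1⟩ with m ≥ 2n ≥ 2, and let Q be any quotient of G in which the image of a is non-trivial. Then the image of a is a generalized torsion element of Q. -/

import Mathlib

/-- A generalized torsion element: a non-identity element some non-empty finite
product of whose conjugates is the identity. -/
def IsGenTorsion {G : Type*} [Group G] (g : G) : Prop :=
  g ≠ 1 ∧ ∃ l : List G, l ≠ [] ∧ (∀ x ∈ l, ∃ v : G, x = v⁻¹ * g * v) ∧ l.prod = 1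

/-- The two relators of
⟨a, b | a b a b⁻¹ a⁻¹ b a b = b a b a⁻¹ b⁻¹ a b a, (b a b⁻¹ a⁻¹ b⁻¹ a b a⁻¹)ⁿ aᵐ = 1⟩,
with `a = FreeGroup.of 0`, `b = FreeGroup.of 1`. -/
def whiteheadRels (m n : ℕ) : Set (FreeGroup (Fin 2)) :=
  let a : FreeGroup (Fin 2) := FreeGroup.of 0
  let b : FreeGroup (Fin 2) := FreeGroup.of 1
  { (a * b * a * b⁻¹ * a⁻¹ * b * a * b) * (b * a * b * a⁻¹ * b⁻¹ * a * b * a)⁻¹,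
    (b * a * b⁻¹ * a⁻¹ * b⁻¹ * a * b * a⁻¹) ^ n * a ^ m }


/-!
Write `D = ⁅b, a⁆ * ⁅b⁻¹, a⁆`. Then `D * a ^ 2 = (b a b⁻¹) * ((b a)⁻¹ a (b a))` is a product of two
conjugates of `a`, and `D ^ (k + 1) * a ^ (2 (k + 1)) = (D * a ^ 2) * a⁻² (D ^ k * a ^ (2 k)) a²`,
so `D ^ n * a ^ (2 n)` is a product of `2 n` conjugates of `a`. The second relator
`D ^ n * a ^ m = 1` therefore exhibits `1` as a product of `2 n + (m - 2 n)` conjugates of `a`,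
and this survives in every quotient.
-/

open scoped commutatorElement

section

variable {G : Type*} [Group G]

theorem mem_conjugatesOf_iff_exists_inv_mul_mul {g x : G} :
    x ∈ conjugatesOf g ↔ ∃ v : G, x = v⁻¹ * g * v := by
  rw [conjugatesOf, Set.mem_ofPred_eq, isConj_iff]
  exact ⟨fun ⟨c, hc⟩ ↦ ⟨c⁻¹, by rw [inv_inv, hc]⟩, fun ⟨v, hv⟩ ↦ ⟨v⁻¹, by rw [inv_inv, hv]⟩⟩

theorem inv_mul_mul_mem_closure_conjugatesOf (g v : G) :
    v⁻¹ * g * v ∈ Submonoid.closure (conjugatesOf g) :=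
  Submonoid.subset_closure (mem_conjugatesOf_iff_exists_inv_mul_mul.mpr ⟨v, rfl⟩)

theorem conj_mem_closure_conjugatesOf {g x : G}
    (hx : x ∈ Submonoid.closure (conjugatesOf g)) (v : G) :
    v⁻¹ * x * v ∈ Submonoid.closure (conjugatesOf g) := by
  induction hx using Submonoid.closure_induction with
  | mem y hy =>
    obtain ⟨w, rfl⟩ := mem_conjugatesOf_iff_exists_inv_mul_mul.mp hy
    simpa only [mul_inv_rev, mul_assoc] using inv_mul_mul_mem_closure_conjugatesOf g (w * v)
  | one => simp
  | mul y z _ _ hy hz =>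
    simpa only [mul_assoc, mul_inv_cancel_left] using mul_mem hy hz

theorem pow_mul_pow_mem_closure_conjugatesOf {g c b : G}
    (h : c * b ∈ Submonoid.closure (conjugatesOf g)) (k : ℕ) :
    c ^ k * b ^ k ∈ Submonoid.closure (conjugatesOf g) := by
  induction k with
  | zero => simp
  | succ k ih =>
    have hstep : c ^ (k + 1) * b ^ (k + 1) = (c * b) * (b⁻¹ * (c ^ k * b ^ k) * b) := by
      rw [pow_succ', pow_succ]; group
    rw [hstep]
    exact mul_mem h (conj_mem_closure_conjugatesOf ih b)

theorem isGenTorsion_of_mul_eq_one {g x y : G} (hg : g ≠ 1) (hx : x ∈ conjugatesOf g)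
    (hy : y ∈ Submonoid.closure (conjugatesOf g)) (h : x * y = 1) : IsGenTorsion g := by
  obtain ⟨l, hl, rfl⟩ := Submonoid.exists_list_of_mem_closure hy
  refine ⟨hg, x :: l, List.cons_ne_nil _ _, ?_, by rwa [List.prod_cons]⟩
  rintro z (_ | ⟨_, hz⟩)
  exacts [mem_conjugatesOf_iff_exists_inv_mul_mul.mp hx,
    mem_conjugatesOf_iff_exists_inv_mul_mul.mp (hl z hz)]

theorem commutator_mul_commutator_mul_sq (a b : G) :
    ⁅b, a⁆ * ⁅b⁻¹, a⁆ * a ^ 2 = b * a * b⁻¹ * ((b * a)⁻¹ * a * (b * a)) := by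
  simp only [commutatorElement_def]; group

theorem isGenTorsion_of_commutator_relator {a b : G} {m n : ℕ} (ha : a ≠ 1) (hn : 1 ≤ n)
    (hm : 2 * n ≤ m) (hrel : (⁅b, a⁆ * ⁅b⁻¹, a⁆) ^ n * a ^ m = 1) : IsGenTorsion a := by
  obtain ⟨k, rfl⟩ := Nat.exists_eq_add_of_le' hn
  obtain ⟨r, rfl⟩ := Nat.exists_eq_add_of_le hm
  set d := ⁅b, a⁆ * ⁅b⁻¹, a⁆
  have hsplit : d * a ^ 2 = b * a * b⁻¹ * ((b * a)⁻¹ * a * (b * a)) :=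
    commutator_mul_commutator_mul_sq a b
  have hpow : d ^ k * (a ^ 2) ^ k ∈ Submonoid.closure (conjugatesOf a) := by
    refine pow_mul_pow_mem_closure_conjugatesOf ?_ k
    rw [hsplit]
    simpa only [inv_inv] using mul_mem (inv_mul_mul_mem_closure_conjugatesOf a b⁻¹)
      (inv_mul_mul_mem_closure_conjugatesOf a (b * a))
  refine isGenTorsion_of_mul_eq_one ha (x := b * a * b⁻¹)
    (mem_conjugatesOf_iff_exists_inv_mul_mul.mpr ⟨b⁻¹, by rw [inv_inv]⟩)
    (y := (b * a)⁻¹ * a * (b * a) * ((a ^ 2)⁻¹ * (d ^ k * (a ^ 2) ^ k) * a ^ 2) * a ^ r) ?_ ?_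
  · exact mul_mem (mul_mem (inv_mul_mul_mem_closure_conjugatesOf a _)
      (conj_mem_closure_conjugatesOf hpow _))
      (Submonoid.pow_mem _ (Submonoid.subset_closure mem_conjugatesOf_self) r)
  · calc _ = d * a ^ 2 * ((a ^ 2)⁻¹ * (d ^ k * (a ^ 2) ^ k) * a ^ 2) * a ^ r := by
          rw [hsplit]; group
      _ = d ^ (k + 1) * a ^ (2 * (k + 1) + r) := by
          rw [pow_succ' d k, pow_add, pow_mul, pow_succ (a ^ 2) k]; group
      _ = 1 := hrel

end

theorem whiteheadRels_relator_eq_one (m n : ℕ) :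
    letI a : PresentedGroup (whiteheadRels m n) := .of 0
    letI b : PresentedGroup (whiteheadRels m n) := .of 1
    (⁅b, a⁆ * ⁅b⁻¹, a⁆) ^ n * a ^ m = 1 := by
  let x : FreeGroup (Fin 2) := .of 0
  let y : FreeGroup (Fin 2) := .of 1
  have hmem : (⁅y, x⁆ * ⁅y⁻¹, x⁆) ^ n * x ^ m ∈ whiteheadRels m n := by
    right; simp only [x, y, commutatorElement_def, inv_inv, mul_assoc]; rfl
  simpa [PresentedGroup.of] using PresentedGroup.one_of_mem hmem

theorem whitehead_filling_genTorsion_quotient_general (m n : ℕ) (hn : 1 ≤ n) (hm : 2 * n ≤ m)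
    {Q : Type*} [Group Q] (φ : PresentedGroup (whiteheadRels m n) →* Q)
    (ha : φ (PresentedGroup.of 0) ≠ 1) :
    IsGenTorsion (φ (PresentedGroup.of 0)) := by
  refine isGenTorsion_of_commutator_relator (b := φ (PresentedGroup.of 1)) ha hn hm ?_
  simpa [map_commutatorElement] using congrArg φ (whiteheadRels_relator_eq_one m n)

/-- In any quotient Q of G in which the image of a is non-trivial, that image is a
generalized torsion element. -/
theorem whitehead_filling_genTorsion_quotient (m n : ℕ) (hn : 1 ≤ n) (hm : 2 * n ≤ m)
    {Q : Type*} [Group Q] (φ : PresentedGroup (whiteheadRels m n) →* Q)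
    (hφ : Function.Surjective φ)
    (ha : φ (PresentedGroup.of 0) ≠ 1) :
    IsGenTorsion (φ (PresentedGroup.of 0)) :=
  whitehead_filling_genTorsion_quotient_general m n hn hm φ ha
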